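/- For finite graded posets P and Q with 0̂ and 1̂, the flag polynomial of the join P * Q equals the product of the flag polynomials: Υ_{P*Q}(a,b) = Υ_P(a,b) · Υ_Q(a,b) in the noncommutative polynomial ring ℤ⟨a,b⟩. -/

import Mathlib

open Polynomial

noncomputable section

/-- The noncommutative polynomial ring ℤ⟨a,b⟩. -/
abbrev FA : Type := FreeAlgebra ℤ (Fin 2)

/-- The variable `a`. -/
def aV : FA := FreeAlgebra.ι ℤ 0

/-- The variable `b`. -/
def bV : FA := FreeAlgebra.ι ℤ 1

/-- `c = a + b`. -/
def cV : FA := aV + bV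

/-- `d = ab + ba`. -/
def dV : FA := aV * bV + bV * aV

/-- The ab-monomial `u_S` of length `n`: the `i`-th letter (for `1 ≤ i ≤ n`)
is `b` if `i ∈ S` and `a` otherwise. -/
def abWord (n : ℕ) (S : Finset ℕ) : FA :=
  ((List.range n).map (fun i => if i + 1 ∈ S then bV else aV)).prod

section PosetDefs

variable {P : Type*} [PartialOrder P]

/-- `ρ` is a rank function exhibiting `P` as a graded poset with `0̂` and `1̂` of rank `n`. -/
def IsGradedOfRank (ρ : P → ℕ) (n : ℕ) : Prop :=
  (∃ b : P, IsBot b ∧ ρ b = 0) ∧ (∃ t : P, IsTop t ∧ ρ t = n) ∧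
    ∀ x y : P, x ⋖ y → ρ y = ρ x + 1

/-- `P` (with rank function `ρ`) is an Eulerian poset of rank `n`: it is graded of rank `n`
with `0̂` and `1̂` and every nonempty interval contains equally many elements of even and of
odd rank. -/
def IsEulerianRank (ρ : P → ℕ) (n : ℕ) : Prop :=
  IsGradedOfRank ρ n ∧
    ∀ s t : P, s ≤ t →
      {x : P | s ≤ x ∧ x ≤ t ∧ Even (ρ x)}.ncard =
        {x : P | s ≤ x ∧ x ≤ t ∧ Odd (ρ x)}.ncard

/-- The flag f-vector: `flagAlpha ρ S` is the number of maximal chains of the rank-selected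
subposet `P_S`, i.e. the number of chains of `P` whose set of ranks is exactly `S`. -/
def flagAlpha (ρ : P → ℕ) (S : Finset ℕ) : ℕ :=
  {C : Finset P | IsChain (· ≤ ·) (C : Set P) ∧ C.image ρ = S}.ncard

/-- The flag h-vector: `β_P(S) = Σ_{T ⊆ S} (-1)^{|S \ T|} α_P(T)`. -/
def flagBeta (ρ : P → ℕ) (S : Finset ℕ) : ℤ :=
  ∑ T ∈ S.powerset, (-1 : ℤ) ^ (S.card - T.card) * (flagAlpha ρ T : ℤ)

/-- The flag polynomial `Υ_P(a,b) = Σ_{S ⊆ [n]} α_P(S) u_S` of a rank `n+1` graded poset. -/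
def flagPoly (ρ : P → ℕ) (n : ℕ) : FA :=
  ∑ S ∈ (Finset.Icc 1 n).powerset, (flagAlpha ρ S : ℤ) • abWord n S

/-- The ab-index `Ψ_P(a,b) = Σ_{S ⊆ [n]} β_P(S) u_S` of a rank `n+1` graded poset. -/
def abIndex (ρ : P → ℕ) (n : ℕ) : FA :=
  ∑ S ∈ (Finset.Icc 1 n).powerset, flagBeta ρ S • abWord n S

end PosetDefs

section Join

variable (P Q : Type*) [PartialOrder P] [PartialOrder Q] [OrderTop P] [OrderBot Q]

/-- The join `P * Q` of two bounded posets: `(P \ {1̂}) ∪ (Q \ {0̂})`, where the order within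
each part is inherited and every element of `P \ {1̂}` lies below every element of
`Q \ {0̂}`. -/
def PosetJoin : Type _ := {x : P // x ≠ ⊤} ⊕ₗ {y : Q // y ≠ ⊥}

instance : PartialOrder (PosetJoin P Q) := by unfold PosetJoin; infer_instance

variable {P Q}

/-- The rank function on the join `P * Q`, where `s` is one less than the rank of `P`:
elements coming from `P` keep their rank, elements coming from `Q` have their rank
shifted up by `s`. -/
def joinRank (ρP : P → ℕ) (ρQ : Q → ℕ) (s : ℕ) : PosetJoin P Q → ℕ :=
  fun z => Sum.elim (fun x => ρP x.1) (fun y => ρQ y.1 + s) (ofLex z)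

end Join

/-!
A rank set `S ⊆ [m + k]` of the join splits uniquely as `A ∪ (B + m)` with `A ⊆ [m]` and
`B ⊆ [k]`, and then `u_S = u_A u_B`. A chain of `P * Q` with rank set `A ∪ (B + m)` is the
disjoint union of a chain of `P \ {1̂}` with rank set `A` and a chain of `Q \ {0̂}` with rank set
`B`, and every such pair gives a chain because `P \ {1̂}` lies entirely below `Q \ {0̂}`. Hence
`α_{P*Q}(A ∪ (B + m)) = α_P(A) α_Q(B)`, and the two sides agree term by term.
-/

open Finset

theorem Finset.sum_powerset_union_of_disjoint {α M : Type*} [DecidableEq α] [AddCommMonoid M]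
    {s t : Finset α} (h : Disjoint s t) (f : Finset α → M) :
    ∑ u ∈ (s ∪ t).powerset, f u = ∑ a ∈ s.powerset, ∑ b ∈ t.powerset, f (a ∪ b) := by
  rw [← sum_product']
  refine (sum_nbij' (fun p : Finset α × Finset α => p.1 ∪ p.2) (fun u => (u ∩ s, u ∩ t))
    ?_ ?_ ?_ ?_ fun _ _ => rfl).symm
  · simp only [mem_product, mem_powerset]
    grind
  · simp only [mem_product, mem_powerset]
    grind
  · simp only [mem_product, mem_powerset, Prod.ext_iff]
    grind [disjoint_left]
  · simp only [mem_powerset]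
    grind

theorem Finset.sum_powerset_Icc_add {M : Type*} [AddCommMonoid M] (m k : ℕ)
    (f : Finset ℕ → M) :
    ∑ S ∈ (Icc 1 (m + k)).powerset, f S =
      ∑ A ∈ (Icc 1 m).powerset, ∑ B ∈ (Icc 1 k).powerset, f (A ∪ B.image (· + m)) := by
  have hIcc : Icc 1 (m + k) = Icc 1 m ∪ (Icc 1 k).image (· + m) := by
    rw [image_add_right_Icc]; ext; simp only [mem_union, mem_Icc]; omega
  have hdisj : Disjoint (Icc 1 m) ((Icc 1 k).image (· + m)) := by
    rw [image_add_right_Icc, disjoint_left]; simp only [mem_Icc]; omega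
  rw [hIcc, sum_powerset_union_of_disjoint hdisj]
  refine sum_congr rfl fun A _ => ?_
  rw [powerset_image, sum_image (image_injOn_powerset_of_injOn (add_left_injective m).injOn)]

theorem Finset.union_eq_union_iff_of_disjoint {γ : Type*} [DecidableEq γ] {s t A B : Finset γ}
    (hs : Disjoint s B) (ht : Disjoint t A) : s ∪ t = A ∪ B ↔ s = A ∧ t = B := by
  rw [disjoint_left] at hs ht
  constructor
  · intro h
    simp only [Finset.ext_iff, mem_union] at h
    constructor <;> ext x <;> grind
  · rintro ⟨rfl, rfl⟩
    rfl

theorem Finset.image_sumElim {α β γ : Type*} [DecidableEq γ] (C : Finset (α ⊕ β)) (f : α → γ)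
    (g : β → γ) : C.image (Sum.elim f g) = C.toLeft.image f ∪ C.toRight.image g := by
  ext x
  simp only [mem_image, mem_union, mem_toLeft, mem_toRight, Sum.exists, Sum.elim_inl,
    Sum.elim_inr]

theorem abWord_add {m k : ℕ} {A B : Finset ℕ} (hA : ∀ a ∈ A, a ≤ m) (hB : 0 ∉ B) :
    abWord (m + k) (A ∪ B.image (· + m)) = abWord m A * abWord k B := by
  unfold abWord
  rw [List.range_add, List.map_append, List.prod_append, List.map_map]
  congr 2 <;> refine List.map_congr_left fun i hi => ?_ <;> rw [List.mem_range] at hi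
  · have hmem : i + 1 ∈ A ∪ B.image (· + m) ↔ i + 1 ∈ A := by
      simp only [mem_union, mem_image]
      grind
    simp only [hmem]
  · have hmem : m + i + 1 ∈ A ∪ B.image (· + m) ↔ i + 1 ∈ B := by
      simp only [mem_union, mem_image]
      grind
    simp only [Function.comp_apply, hmem]

namespace IsGradedOfRank

variable {P : Type*} [PartialOrder P] {ρ : P → ℕ} {n : ℕ}

theorem strictMono [Finite P] (h : IsGradedOfRank ρ n) : StrictMono ρ := by
  have := Fintype.ofFinite P
  classical
  let := Fintype.toLocallyFiniteOrder (α := P)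
  exact (strictMono_iff_forall_covBy ρ).2 fun x y hxy => by rw [h.2.2 x y hxy]; omega

theorem rank_bot [OrderBot P] (h : IsGradedOfRank ρ n) : ρ ⊥ = 0 := by
  obtain ⟨⟨b, hb, hρb⟩, -, -⟩ := h
  rwa [hb.eq_bot] at hρb

theorem rank_top [OrderTop P] (h : IsGradedOfRank ρ n) : ρ ⊤ = n := by
  obtain ⟨-, ⟨t, ht, hρt⟩, -⟩ := h
  rwa [ht.eq_top] at hρt

theorem rank_lt_of_ne_top [Finite P] [OrderTop P] (h : IsGradedOfRank ρ n) {x : P}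
    (hx : x ≠ ⊤) : ρ x < n :=
  h.rank_top ▸ h.strictMono hx.lt_top

theorem rank_pos_of_ne_bot [Finite P] [OrderBot P] (h : IsGradedOfRank ρ n) {x : P}
    (hx : x ≠ ⊥) : 0 < ρ x :=
  h.rank_bot ▸ h.strictMono hx.bot_lt

end IsGradedOfRank

section FlagAlpha

variable {α β : Type*} [PartialOrder α] [PartialOrder β]

theorem isChain_sumLex_iff {C : Finset (α ⊕ₗ β)} :
    IsChain (· ≤ ·) (C : Set (α ⊕ₗ β)) ↔
      IsChain (· ≤ ·) (C.toLeft : Set α) ∧ IsChain (· ≤ ·) (C.toRight : Set β) := by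
  constructor
  · intro h
    constructor
    · intro a ha a' ha' hne
      exact h (mem_toLeft.1 ha) (mem_toLeft.1 ha') (Sum.inl_injective.ne hne) |>.imp
        Sum.Lex.inl_le_inl_iff.1 Sum.Lex.inl_le_inl_iff.1
    · intro b hb b' hb' hne
      exact h (mem_toRight.1 hb) (mem_toRight.1 hb') (Sum.inr_injective.ne hne) |>.imp
        Sum.Lex.inr_le_inr_iff.1 Sum.Lex.inr_le_inr_iff.1
  · rintro ⟨hl, hr⟩ (a | b) hx (a' | b') hy hne
    · exact (hl (mem_toLeft.2 hx) (mem_toLeft.2 hy) (ne_of_apply_ne _ hne)).imp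
        Sum.Lex.inl_le_inl_iff.2 Sum.Lex.inl_le_inl_iff.2
    · exact Or.inl (Sum.Lex.inl_le_inr a b')
    · exact Or.inr (Sum.Lex.inl_le_inr a' b)
    · exact (hr (mem_toRight.2 hx) (mem_toRight.2 hy) (ne_of_apply_ne _ hne)).imp
        Sum.Lex.inr_le_inr_iff.2 Sum.Lex.inr_le_inr_iff.2

theorem flagAlpha_sumLex_elim {ρ₁ : α → ℕ} {ρ₂ : β → ℕ} {A B : Finset ℕ}
    (h₁ : ∀ a, ρ₁ a ∉ B) (h₂ : ∀ b, ρ₂ b ∉ A) :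
    flagAlpha (fun z : α ⊕ₗ β => Sum.elim ρ₁ ρ₂ (ofLex z)) (A ∪ B) =
      flagAlpha ρ₁ A * flagAlpha ρ₂ B := by
  classical
  let e : Finset (α ⊕ₗ β) ≃ Finset α × Finset β := Finset.sumEquiv.toEquiv
  have hset : {C : Finset (α ⊕ₗ β) | IsChain (· ≤ ·) (C : Set (α ⊕ₗ β)) ∧
      C.image (fun z => Sum.elim ρ₁ ρ₂ (ofLex z)) = A ∪ B} =
      e ⁻¹' ({C : Finset α | IsChain (· ≤ ·) (C : Set α) ∧ C.image ρ₁ = A} ×ˢ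
        {C : Finset β | IsChain (· ≤ ·) (C : Set β) ∧ C.image ρ₂ = B}) := by
    ext C
    have hdisj₁ : Disjoint (C.toLeft.image ρ₁) B :=
      disjoint_left.2 (by simpa using fun a _ => h₁ a)
    have hdisj₂ : Disjoint (C.toRight.image ρ₂) A :=
      disjoint_left.2 (by simpa using fun b _ => h₂ b)
    have himage : C.image (fun z => Sum.elim ρ₁ ρ₂ (ofLex z)) =
        C.toLeft.image ρ₁ ∪ C.toRight.image ρ₂ :=
      image_sumElim C ρ₁ ρ₂
    simp only [Set.mem_ofPred_eq, Set.mem_preimage, Set.mem_prod, isChain_sumLex_iff, himage,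
      union_eq_union_iff_of_disjoint hdisj₁ hdisj₂]
    exact and_and_and_comm
  rw [flagAlpha, hset, Set.ncard_preimage_of_injective_subset_range e.injective (by simp),
    Set.ncard_prod]
  rfl

theorem flagAlpha_comp_of_injective (ρ : α → ℕ) {f : ℕ → ℕ} (hf : f.Injective)
    (S : Finset ℕ) : flagAlpha (f ∘ ρ) (S.image f) = flagAlpha ρ S := by
  classical
  unfold flagAlpha
  simp only [← image_image, (image_injective hf).eq_iff]

theorem flagAlpha_subtype_val {p : α → Prop} (ρ : α → ℕ) {S : Finset ℕ}
    (hS : ∀ x, ρ x ∈ S → p x) :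
    flagAlpha (fun x : Subtype p => ρ x) S = flagAlpha ρ S := by
  classical
  have hchain (D : Finset (Subtype p)) :
      IsChain (· ≤ ·) (D.map (Function.Embedding.subtype p) : Set α) ↔
        IsChain (· ≤ ·) (D : Set (Subtype p)) := by
    rw [coe_map]
    exact IsChain.image_relEmbedding_iff (φ := OrderEmbedding.subtype p)
  have himage (D : Finset (Subtype p)) :
      (D.map (Function.Embedding.subtype p)).image ρ = D.image fun x : Subtype p => ρ x := by
    rw [map_eq_image, image_image]; rfl
  refine Set.ncard_congr (fun C _ => C.map (Function.Embedding.subtype p)) ?_ ?_ ?_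
  · rintro C ⟨hC, hCS⟩
    exact ⟨(hchain C).2 hC, (himage C).trans hCS⟩
  · intro C C' _ _ h
    exact map_injective _ h
  · rintro C ⟨hC, hCS⟩
    have hCsub : (C.subtype p).map (Function.Embedding.subtype p) = C :=
      subtype_map_of_mem fun x hx => hS x (hCS ▸ mem_image_of_mem ρ hx)
    refine ⟨C.subtype p, ⟨?_, ?_⟩, hCsub⟩
    · rwa [← hchain, hCsub]
    · rwa [← himage, hCsub]

end FlagAlpha

theorem flagAlpha_joinRank {P Q : Type*} [PartialOrder P] [PartialOrder Q] [Finite P]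
    [Finite Q] [BoundedOrder P] [BoundedOrder Q] {ρP : P → ℕ} {ρQ : Q → ℕ} {m n : ℕ}
    (hP : IsGradedOfRank ρP (m + 1)) (hQ : IsGradedOfRank ρQ n) {A B : Finset ℕ}
    (hA : ∀ a ∈ A, a ≤ m) (hB : 0 ∉ B) :
    flagAlpha (joinRank ρP ρQ m) (A ∪ B.image (· + m)) = flagAlpha ρP A * flagAlpha ρQ B := by
  have hP_lower : flagAlpha (fun x : {x : P // x ≠ ⊤} => ρP x) A = flagAlpha ρP A :=
    flagAlpha_subtype_val ρP fun x hx hx_top => by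
      have := hA _ hx
      rw [hx_top, hP.rank_top] at this
      omega
  have hQ_upper :
      flagAlpha (fun y : {y : Q // y ≠ ⊥} => ρQ y + m) (B.image (· + m)) = flagAlpha ρQ B :=
    (flagAlpha_comp_of_injective _ (add_left_injective m) B).trans
      (flagAlpha_subtype_val ρQ fun y hy hy_bot => hB (hQ.rank_bot ▸ hy_bot ▸ hy))
  have hP_below : ∀ x : {x : P // x ≠ ⊤}, ρP x ∉ B.image (· + m) := fun x => by
    have := hP.rank_lt_of_ne_top x.2
    simp only [mem_image, not_exists, not_and]
    intro b hb
    have := ne_of_mem_of_not_mem hb hB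
    omega
  have hQ_above : ∀ y : {y : Q // y ≠ ⊥}, ρQ y + m ∉ A := fun y hy => by
    have := hA _ hy
    have := hQ.rank_pos_of_ne_bot y.2
    omega
  rw [← hP_lower, ← hQ_upper]
  exact flagAlpha_sumLex_elim hP_below hQ_above

/-- For finite graded posets `P` and `Q` with `0̂` and `1̂` (of ranks `m+1`
and `k+1`), the flag polynomial of the join `P * Q` equals the product of the flag
polynomials: `Υ_{P*Q}(a,b) = Υ_P(a,b) · Υ_Q(a,b)` in `ℤ⟨a,b⟩`. -/
theorem flagPoly_join {P Q : Type*} [PartialOrder P] [PartialOrder Q] [Fintype P] [Fintype Q]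
    [BoundedOrder P] [BoundedOrder Q] (ρP : P → ℕ) (ρQ : Q → ℕ) (m k : ℕ)
    (hP : IsGradedOfRank ρP (m + 1)) (hQ : IsGradedOfRank ρQ (k + 1)) :
    flagPoly (joinRank ρP ρQ m) (m + k) = flagPoly ρP m * flagPoly ρQ k := by
  rw [flagPoly, flagPoly, flagPoly, sum_powerset_Icc_add, sum_mul_sum]
  refine sum_congr rfl fun A hA => sum_congr rfl fun B hB => ?_
  have hA_le : ∀ a ∈ A, a ≤ m := fun a ha => (mem_Icc.1 (mem_powerset.1 hA ha)).2
  have hB_pos : 0 ∉ B := fun h => by simpa using mem_powerset.1 hB h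
  rw [flagAlpha_joinRank hP hQ hA_le hB_pos, abWord_add hA_le hB_pos, Nat.cast_mul,
    smul_mul_smul_comm]
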